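/- Let d ≥ 1, m ≥ 1, T ∈ (0,∞), 1 < p ≤ 3, 0 < α ≤ 1, and E, M ≥ 0. Let v : (0,T) × ℝ^d → ℝ^m be measurable with ess sup_{t∈(0,T)} ‖v(t,·)‖_{L²(ℝ^d)} ≤ E and ‖v(·,·+z) − v‖_{L^p(0,T;L^{2p/(p−1)}(ℝ^d))} ≤ M|z|^α for every z ∈ ℝ^d \ {0}. Then for every z ∈ ℝ^d \ {0}, ‖v(·,·+z) − v‖_{L³(0,T;L³(ℝ^d))} ≤ (2E)^{1−p/3} M^{p/3} |z|^{pα/3}. -/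

import Mathlib

open MeasureTheory ENNReal

/-- The mixed norm `‖v‖_{L^p(0,T;L^q(ℝ^d))} = (∫_0^T ‖v(t,·)‖_{L^q}^p dt)^{1/p}`
(finite exponents). -/
noncomputable def mixedNorm (d m : ℕ) (T p q : ℝ)
    (v : ℝ → EuclideanSpace ℝ (Fin d) → EuclideanSpace ℝ (Fin m)) : ℝ≥0∞ :=
  (∫⁻ t in Set.Ioo 0 T, (eLpNorm (v t) (ENNReal.ofReal q) volume) ^ p) ^ (1 / p)

/-!
At each time, Hölder's inequality interpolates `L³` between `L²` and `L^q`, `q = 2p/(p-1)`: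
`‖w‖₃³ ≤ ‖w‖₂^(3-p) ‖w‖_q^p`. For the increment `w = v(·+z) - v` translation invariance of
Lebesgue measure gives `‖w(t)‖₂ ≤ 2E`, so integrating in time yields
`‖w‖³_{L³L³} ≤ (2E)^(3-p) ‖w‖^p_{L^pL^q} ≤ (2E)^(3-p) (M|z|^α)^p`.
-/

section Interpolation

variable {X F : Type*} [MeasurableSpace X] {μ : Measure X} [NormedAddCommGroup F]

theorem eLpNorm_ofReal_rpow_eq_lintegral (f : X → F) {r : ℝ} (hr : 0 < r) :
    eLpNorm f (ENNReal.ofReal r) μ ^ r = ∫⁻ x, ‖f x‖ₑ ^ r ∂μ := by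
  have := eLpNorm_nnreal_pow_eq_lintegral (f := f) (μ := μ) (p := r.toNNReal)
    (Real.toNNReal_pos.mpr hr).ne'
  rwa [Real.coe_toNNReal _ hr.le] at this

theorem lintegral_enorm_rpow_convexComb_le {f : X → F} (hf : AEStronglyMeasurable f μ)
    {a b s t : ℝ} (ha : 0 ≤ a) (hb : 0 ≤ b) (hab : a + b = 1) (hs : 0 ≤ s) (ht : 0 ≤ t) :
    ∫⁻ x, ‖f x‖ₑ ^ (a * s + b * t) ∂μ ≤
      (∫⁻ x, ‖f x‖ₑ ^ s ∂μ) ^ a * (∫⁻ x, ‖f x‖ₑ ^ t ∂μ) ^ b := by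
  calc ∫⁻ x, ‖f x‖ₑ ^ (a * s + b * t) ∂μ
      = ∫⁻ x, (‖f x‖ₑ ^ s) ^ a * (‖f x‖ₑ ^ t) ^ b ∂μ := by
        refine lintegral_congr fun x => ?_
        rw [ENNReal.rpow_add_of_nonneg _ _ (by positivity) (by positivity),
          ← ENNReal.rpow_mul, ← ENNReal.rpow_mul, mul_comm s, mul_comm t]
    _ ≤ _ := ENNReal.lintegral_mul_norm_pow_le (hf.enorm.pow_const s) (hf.enorm.pow_const t)
        ha hb hab

theorem eLpNorm_three_rpow_le {f : X → F} (hf : AEStronglyMeasurable f μ) {p : ℝ}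
    (hp1 : 1 < p) (hp3 : p ≤ 3) :
    eLpNorm f 3 μ ^ (3 : ℝ) ≤
      eLpNorm f 2 μ ^ (3 - p) * eLpNorm f (ENNReal.ofReal (2 * p / (p - 1))) μ ^ p := by
  have hp1' : 0 < p - 1 := by linarith
  have hq : 0 < 2 * p / (p - 1) := by positivity
  have hexp : (3 - p) / 2 * 2 + (p - 1) / 2 * (2 * p / (p - 1)) = 3 := by
    field_simp; ring
  have key := lintegral_enorm_rpow_convexComb_le (μ := μ) hf (a := (3 - p) / 2)
    (b := (p - 1) / 2) (s := 2) (by linarith) (by linarith) (by ring) zero_le_two hq.le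
  rw [hexp, ← eLpNorm_ofReal_rpow_eq_lintegral f zero_lt_three,
    ← eLpNorm_ofReal_rpow_eq_lintegral f zero_lt_two,
    ← eLpNorm_ofReal_rpow_eq_lintegral f hq, ← ENNReal.rpow_mul, ← ENNReal.rpow_mul,
    show 2 * ((3 - p) / 2) = 3 - p by ring,
    show 2 * p / (p - 1) * ((p - 1) / 2) = p by field_simp] at key
  simpa only [ofReal_ofNat] using key

end Interpolation

theorem eLpNorm_sub_comp_add_right_le {G F : Type*} [AddGroup G] [MeasurableSpace G]
    [MeasurableAdd G] [NormedAddCommGroup F] (μ : Measure G) [μ.IsAddRightInvariant]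
    {f : G → F} (hf : AEStronglyMeasurable f μ) (z : G) {q : ℝ≥0∞} (hq : 1 ≤ q) :
    eLpNorm (fun x => f (x + z) - f x) q μ ≤ 2 * eLpNorm f q μ := by
  have htrans := measurePreserving_add_right μ z
  calc eLpNorm (fun x => f (x + z) - f x) q μ
      ≤ eLpNorm (f ∘ fun x => x + z) q μ + eLpNorm f q μ :=
        eLpNorm_sub_le (hf.comp_measurePreserving htrans) hf hq
    _ = 2 * eLpNorm f q μ := by
        rw [eLpNorm_comp_measurePreserving hf htrans, two_mul]

theorem mixedNorm_rpow_self (d m : ℕ) (T : ℝ) {p : ℝ} (hp : 0 < p) (q : ℝ)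
    (w : ℝ → EuclideanSpace ℝ (Fin d) → EuclideanSpace ℝ (Fin m)) :
    mixedNorm d m T p q w ^ p =
      ∫⁻ t in Set.Ioo 0 T, eLpNorm (w t) (ENNReal.ofReal q) volume ^ p := by
  rw [mixedNorm, ← ENNReal.rpow_mul, one_div_mul_cancel hp.ne', ENNReal.rpow_one]

theorem mixedNorm_three_three_le {d m : ℕ} {T p : ℝ} (hp1 : 1 < p) (hp3 : p ≤ 3) {A : NNReal}
    (w : ℝ → EuclideanSpace ℝ (Fin d) → EuclideanSpace ℝ (Fin m))
    (hw : ∀ t, AEStronglyMeasurable (w t) volume)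
    (hA : ∀ᵐ t ∂volume.restrict (Set.Ioo 0 T), eLpNorm (w t) 2 volume ≤ A) :
    mixedNorm d m T 3 3 w ≤
      (A : ℝ≥0∞) ^ (1 - p / 3) * mixedNorm d m T p (2 * p / (p - 1)) w ^ (p / 3) := by
  have hp0 : 0 < p := by linarith
  have hcube : mixedNorm d m T 3 3 w ^ (3 : ℝ) ≤
      (A : ℝ≥0∞) ^ (3 - p) * mixedNorm d m T p (2 * p / (p - 1)) w ^ p := by
    rw [mixedNorm_rpow_self _ _ _ zero_lt_three, mixedNorm_rpow_self _ _ _ hp0,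
      ← lintegral_const_mul' _ _ (rpow_ne_top_of_nonneg (by linarith) coe_ne_top)]
    refine lintegral_mono_ae ?_
    filter_upwards [hA] with t ht
    calc eLpNorm (w t) (ENNReal.ofReal 3) volume ^ (3 : ℝ)
        ≤ eLpNorm (w t) 2 volume ^ (3 - p) *
            eLpNorm (w t) (ENNReal.ofReal (2 * p / (p - 1))) volume ^ p := by
          simpa only [ofReal_ofNat] using eLpNorm_three_rpow_le (hw t) hp1 hp3
      _ ≤ _ := by gcongr
  calc mixedNorm d m T 3 3 w
      = (mixedNorm d m T 3 3 w ^ (3 : ℝ)) ^ (1 / 3 : ℝ) := by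
        rw [← ENNReal.rpow_mul]; norm_num
    _ ≤ ((A : ℝ≥0∞) ^ (3 - p) * mixedNorm d m T p (2 * p / (p - 1)) w ^ p) ^ (1 / 3 : ℝ) :=
        by gcongr
    _ = _ := by
        rw [ENNReal.mul_rpow_of_nonneg _ _ (by norm_num), ← ENNReal.rpow_mul, ← ENNReal.rpow_mul]
        ring_nf

theorem stmt17_general (d m : ℕ) (T p α E M : ℝ)
    (hp1 : 1 < p) (hp3 : p ≤ 3)
    (v : ℝ → EuclideanSpace ℝ (Fin d) → EuclideanSpace ℝ (Fin m))
    (hmeas : Measurable (Function.uncurry v))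
    (hEbound : essSup (fun t => eLpNorm (v t) 2 volume)
        (volume.restrict (Set.Ioo 0 T)) ≤ ENNReal.ofReal E)
    (hbesov : ∀ z : EuclideanSpace ℝ (Fin d), z ≠ 0 →
      mixedNorm d m T p (2 * p / (p - 1)) (fun t x => v t (x + z) - v t x) ≤
        ENNReal.ofReal (M * ‖z‖ ^ α)) :
    ∀ z : EuclideanSpace ℝ (Fin d), z ≠ 0 →
      mixedNorm d m T 3 3 (fun t x => v t (x + z) - v t x) ≤
        ENNReal.ofReal (2 * E) ^ (1 - p / 3) * ENNReal.ofReal M ^ (p / 3) *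
          ENNReal.ofReal (‖z‖ ^ (p * α / 3)) := by
  intro z hz
  have hv : ∀ t, AEStronglyMeasurable (v t) volume := fun t =>
    (hmeas.comp measurable_prodMk_left).aestronglyMeasurable
  have hL2 : ∀ᵐ t ∂volume.restrict (Set.Ioo 0 T),
      eLpNorm (fun x => v t (x + z) - v t x) 2 volume ≤ ENNReal.ofReal (2 * E) := by
    filter_upwards [ENNReal.ae_le_essSup _] with t ht
    calc eLpNorm (fun x => v t (x + z) - v t x) 2 volume ≤ 2 * eLpNorm (v t) 2 volume :=
          eLpNorm_sub_comp_add_right_le volume (hv t) z one_le_two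
      _ ≤ 2 * ENNReal.ofReal E := by gcongr; exact ht.trans hEbound
      _ = ENNReal.ofReal (2 * E) := by rw [ENNReal.ofReal_mul zero_le_two, ofReal_ofNat]
  calc mixedNorm d m T 3 3 (fun t x => v t (x + z) - v t x)
      ≤ ENNReal.ofReal (2 * E) ^ (1 - p / 3) *
          mixedNorm d m T p (2 * p / (p - 1)) (fun t x => v t (x + z) - v t x) ^ (p / 3) :=
        mixedNorm_three_three_le hp1 hp3 _ (fun t => ((hv t).comp_measurePreserving
          (measurePreserving_add_right volume z)).sub (hv t)) hL2
    _ ≤ ENNReal.ofReal (2 * E) ^ (1 - p / 3) * ENNReal.ofReal (M * ‖z‖ ^ α) ^ (p / 3) := by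
        gcongr; exact hbesov z hz
    _ = _ := by
        rw [ENNReal.ofReal_mul' (q := ‖z‖ ^ α) (by positivity),
          ENNReal.mul_rpow_of_nonneg _ _ (by linarith),
          ENNReal.ofReal_rpow_of_nonneg (x := ‖z‖ ^ α) (by positivity) (by linarith),
          ← Real.rpow_mul (norm_nonneg z), mul_assoc]
        ring_nf

/-- **Quantitative space–time interpolation (after (3.2)).**
For `d, m ≥ 1`, `T ∈ (0,∞)`, `1 < p ≤ 3`, `0 < α ≤ 1`, `E, M ≥ 0`, if a measurable
`v : (0,T) × ℝ^d → ℝ^m` satisfies `ess sup_{t∈(0,T)} ‖v(t,·)‖_{L²} ≤ E` and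
`‖v(·,·+z) − v‖_{L^p(0,T;L^{2p/(p−1)})} ≤ M|z|^α` for all `z ≠ 0`, then for all `z ≠ 0`,
`‖v(·,·+z) − v‖_{L³(0,T;L³)} ≤ (2E)^{1−p/3} M^{p/3} |z|^{pα/3}`. -/
theorem stmt17 (d m : ℕ) (hd : 1 ≤ d) (hm : 1 ≤ m) (T p α E M : ℝ)
    (hT : 0 < T) (hp1 : 1 < p) (hp3 : p ≤ 3) (hα0 : 0 < α) (hα1 : α ≤ 1)
    (hE : 0 ≤ E) (hM : 0 ≤ M)
    (v : ℝ → EuclideanSpace ℝ (Fin d) → EuclideanSpace ℝ (Fin m))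
    (hmeas : Measurable (Function.uncurry v))
    (hEbound : essSup (fun t => eLpNorm (v t) 2 volume)
        (volume.restrict (Set.Ioo 0 T)) ≤ ENNReal.ofReal E)
    (hbesov : ∀ z : EuclideanSpace ℝ (Fin d), z ≠ 0 →
      mixedNorm d m T p (2 * p / (p - 1)) (fun t x => v t (x + z) - v t x) ≤
        ENNReal.ofReal (M * ‖z‖ ^ α)) :
    ∀ z : EuclideanSpace ℝ (Fin d), z ≠ 0 →
      mixedNorm d m T 3 3 (fun t x => v t (x + z) - v t x) ≤
        ENNReal.ofReal (2 * E) ^ (1 - p / 3) * ENNReal.ofReal M ^ (p / 3) *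
          ENNReal.ofReal (‖z‖ ^ (p * α / 3)) :=
  stmt17_general d m T p α E M hp1 hp3 v hmeas hEbound hbesov
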